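/- Let W be a smooth vector field on a manifold S, let ρ: S → GL(n, ℝ) be smooth, and let ξ₀ be a smooth vector field on ℝⁿ. Define on ℝⁿ × S the vector field V(x, s) = (ξ_s(x), W(s)) where ξ_s(x) = (D_W ρ)(s)·ρ(s)⁻¹ x + ρ(s)·ξ₀(ρ(s)⁻¹ x) (equivalently, ξ_s(x) satisfies the paper's coupling condition). Then every integral curve γ(t) = (γ_M(t), γ_S(t)) of −V has the form γ_S an integral curve of −W, and γ_M(t) = ρ(γ_S(t)) ζ(t) for some integral curve ζ of −ξ₀. -/

import Mathlib

section InverseFamily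

variable {𝕜 : Type*} [NontriviallyNormedField 𝕜]
  {E : Type*} [NormedAddCommGroup E] [NormedSpace 𝕜 E] [CompleteSpace E]

theorem HasDerivAt.of_inverse_family {A B : 𝕜 → E →L[𝕜] E} {A' : E →L[𝕜] E} {t : 𝕜}
    (hAB : ∀ s, A s ∘L B s = .id 𝕜 E ∧ B s ∘L A s = .id 𝕜 E) (hA : HasDerivAt A A' t) :
    HasDerivAt B (-(B t ∘L A' ∘L B t)) t := by
  let u : 𝕜 → (E →L[𝕜] E)ˣ := fun s => ⟨A s, B s, (hAB s).1, (hAB s).2⟩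
  have hB : Ring.inverse ∘ A = B := funext fun s => Ring.inverse_unit (u s)
  have key := (hasFDerivAt_ringInverse (u t)).comp_hasDerivAt t hA
  rwa [hB] at key

theorem HasDerivAt.inverse_family_apply {A B : 𝕜 → E →L[𝕜] E} {γ : 𝕜 → E}
    {A' : E →L[𝕜] E} {v : E} {t : 𝕜}
    (hAB : ∀ s, A s ∘L B s = .id 𝕜 E ∧ B s ∘L A s = .id 𝕜 E) (hA : HasDerivAt A A' t)
    (hγ : HasDerivAt γ v t) :
    HasDerivAt (fun s => B s (γ s)) (B t (v - A' (B t (γ t)))) t := by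
  convert (hA.of_inverse_family hAB).clm_apply hγ using 1
  simp only [neg_apply, ContinuousLinearMap.comp_apply, map_sub]
  abel

/-- Along the base curve, the term `(D_W ρ) ρ⁻¹` of the coupled field cancels exactly the
derivative of `ρ⁻¹`, so conjugating back by `ρ⁻¹` leaves only the fiber field `ξ₀`. -/
theorem HasDerivAt.inverse_family_apply_of_coupled
    {S : Type*} [NormedAddCommGroup S] [NormedSpace 𝕜 S]
    {ρ ρinv : S → E →L[𝕜] E} {W : S → S} {ξ₀ : E → E} {γS : 𝕜 → S} {γM : 𝕜 → E} {t : 𝕜}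
    (hinv : ∀ s, ρ s ∘L ρinv s = .id 𝕜 E ∧ ρinv s ∘L ρ s = .id 𝕜 E)
    (hρ : DifferentiableAt 𝕜 ρ (γS t)) (hγS : HasDerivAt γS (-W (γS t)) t)
    (hγM : HasDerivAt γM (-(fderiv 𝕜 ρ (γS t) (W (γS t)) (ρinv (γS t) (γM t)) +
      ρ (γS t) (ξ₀ (ρinv (γS t) (γM t))))) t) :
    HasDerivAt (fun t => ρinv (γS t) (γM t)) (-ξ₀ (ρinv (γS t) (γM t))) t := by
  have hρinv_ρ (x : E) : ρinv (γS t) (ρ (γS t) x) = x :=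
    DFunLike.congr_fun (hinv (γS t)).2 x
  convert HasDerivAt.inverse_family_apply (A := fun s => ρ (γS s)) (fun s => hinv (γS s))
    (hρ.hasFDerivAt.comp_hasDerivAt t hγS) hγM using 1
  simp only [map_neg, neg_apply, sub_neg_eq_add, neg_add_rev, neg_add_cancel_right,
    hρinv_ρ]

end InverseFamily

/-- Coupled vector field for a rotating family.  With base vector field
`W` on `S = ℝᵏ`, a smooth family of invertible operators `ρ(s)` on `ℝⁿ` (with inverse
family `ρinv`), fiber vector field `ξ₀` on `ℝⁿ`, and coupled fiber field
`ξ_s(x) = (D_W ρ)(s) (ρ(s)⁻¹ x) + ρ(s) (ξ₀ (ρ(s)⁻¹ x))`, every integral curve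
`γ = (γ_M, γ_S)` of `-V`, `V (x, s) = (ξ_{s}(x), W s)` — i.e. `γ_S` is an integral
curve of `-W` and `γ_M' = -ξ_{γ_S}(γ_M)` — has the form `γ_M(t) = ρ(γ_S(t)) ζ(t)` for
some integral curve `ζ` of `-ξ₀`. -/
theorem stmt18 (k n : ℕ)
    (W : (Fin k → ℝ) → (Fin k → ℝ))
    (ρ ρinv : (Fin k → ℝ) → ((Fin n → ℝ) →L[ℝ] (Fin n → ℝ)))
    (hρ : Differentiable ℝ ρ)
    (hinv : ∀ s, (ρ s).comp (ρinv s) = ContinuousLinearMap.id ℝ (Fin n → ℝ) ∧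
                 (ρinv s).comp (ρ s) = ContinuousLinearMap.id ℝ (Fin n → ℝ))
    (ξ₀ : (Fin n → ℝ) → (Fin n → ℝ))
    (ξ : (Fin k → ℝ) → (Fin n → ℝ) → (Fin n → ℝ))
    (hξ : ∀ s x, ξ s x = (fderiv ℝ ρ s (W s)) (ρinv s x) + ρ s (ξ₀ (ρinv s x)))
    (γS : ℝ → Fin k → ℝ) (γM : ℝ → Fin n → ℝ)
    (hγS : ∀ t, HasDerivAt γS (-W (γS t)) t)
    (hγM : ∀ t, HasDerivAt γM (-ξ (γS t) (γM t)) t) :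
    ∃ ζ : ℝ → Fin n → ℝ,
      (∀ t, HasDerivAt ζ (-ξ₀ (ζ t)) t) ∧ ∀ t, γM t = ρ (γS t) (ζ t) := by
  refine ⟨fun t => ρinv (γS t) (γM t), fun t => ?_, fun t => ?_⟩
  · exact .inverse_family_apply_of_coupled hinv (hρ _) (hγS t) (hξ _ _ ▸ hγM t)
  · exact (DFunLike.congr_fun (hinv (γS t)).1 (γM t)).symm
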